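/- arXiv:2003.04964 — 4 statements merged into one kernel-verified Lean document; each statement's English description precedes it below -/
import Mathlib

section
/- For all bit strings α and β over the alphabet {0,1}, the pair of equations s₁ = t₁ and s₂ = t₂ holds simultaneously if and only if the single equation s₁ · 0 · s₂ · s₁ · 1 · s₂ = t₁ · 0 · t₂ · t₁ · 1 · t₂ holds, where · denotes concatenation. Concretely: for bit strings a₁, a₂, b₁, b₂, we have (a₁ = b₁ ∧ a₂ = b₂) ↔ a₁ ++ [0] ++ a₂ ++ a₁ ++ [1] ++ a₂ = b₁ ++ [0] ++ b₂ ++ b₁ ++ [1] ++ b₂. -/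
/-!
The two halves of `a₁ 0 a₂ a₁ 1 a₂` have the same length, so an equation between two such words
splits into `a₁ 0 a₂ = b₁ 0 b₂` and `a₁ 1 a₂ = b₁ 1 b₂`. If `|a₁| < |b₁|`, reading both equations
at position `|a₁|` would make the letter of `b₁` there equal to both `0` and `1`; hence
`|a₁| = |b₁|`, and the two words cancel.
-/

namespace List

variable {α : Type*} {x y x' y' : List α} {c c' d : α}

theorem getElem?_length_of_append_cons_eq (h : x ++ c :: y = x' ++ c' :: y')
    (hlt : x.length < x'.length) : x'[x.length]? = some c := by
  have := congrArg (·[x.length]?) h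
  simpa [getElem?_append_left hlt] using this.symm

theorem length_eq_of_append_cons_eq_of_ne (hcd : c ≠ d)
    (hc : x ++ c :: y = x' ++ c :: y') (hd : x ++ d :: y = x' ++ d :: y') :
    x.length = x'.length := by
  by_contra hne
  rcases Nat.lt_or_gt_of_ne hne with hlt | hlt
  · exact hcd <| Option.some.inj <|
      (getElem?_length_of_append_cons_eq hc hlt).symm.trans
        (getElem?_length_of_append_cons_eq hd hlt)
  · exact hcd <| Option.some.inj <|
      (getElem?_length_of_append_cons_eq hc.symm hlt).symm.trans
        (getElem?_length_of_append_cons_eq hd.symm hlt)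

theorem eq_and_eq_of_append_cons_eq_of_ne (hcd : c ≠ d)
    (hc : x ++ c :: y = x' ++ c :: y') (hd : x ++ d :: y = x' ++ d :: y') :
    x = x' ∧ y = y' := by
  obtain ⟨rfl, hy⟩ := append_inj hc (length_eq_of_append_cons_eq_of_ne hcd hc hd)
  exact ⟨rfl, cons_injective hy⟩

end List

theorem stmt_0 (a₁ a₂ b₁ b₂ : List Bool) :
    (a₁ = b₁ ∧ a₂ = b₂) ↔
      a₁ ++ [false] ++ a₂ ++ a₁ ++ [true] ++ a₂ =
        b₁ ++ [false] ++ b₂ ++ b₁ ++ [true] ++ b₂ := by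
  constructor
  · rintro ⟨rfl, rfl⟩
    rfl
  · intro h
    have h' : (a₁ ++ false :: a₂) ++ (a₁ ++ true :: a₂) =
        (b₁ ++ false :: b₂) ++ (b₁ ++ true :: b₂) := by
      simpa only [List.append_assoc, List.singleton_append, List.cons_append, List.nil_append] using h
    have hlen : (a₁ ++ false :: a₂).length = (b₁ ++ false :: b₂).length := by
      have := congrArg List.length h'
      simp only [List.length_append, List.length_cons] at this ⊢
      omega
    obtain ⟨h0, h1⟩ := List.append_inj h' hlen
    exact List.eq_and_eq_of_append_cons_eq_of_ne Bool.false_ne_true h0 h1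
end

section
/- For bit strings u and w, we have (u = ε ∨ w = ε) if and only if (uw = wu and there exist bit strings y₁, y₂, y₃, y₄ with y₁y₂ = 0, y₃y₄ = 1, u y₁ w y₂ = w y₂ u y₁, and u y₃ w y₄ = w y₄ u y₃). -/
/-!
Commuting words are powers of a common word, so the letter `x` has the same density in both:
`|a|ₓ * |b| = |b|ₓ * |a|`. Applying this to `u, w` and to `u y₁, w y₂`, where `y₁ y₂` is a single
letter other than `x`, forces `x` to be absent from `u` as soon as `w ≠ ε`. Taking `x = 1` with
`y₁ y₂ = 0` and `x = 0` with `y₃ y₄ = 1` empties `u`.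
-/

namespace List

variable {α : Type*}

theorem append_comm_cases {a b : List α} (h : a ++ b = b ++ a) :
    (∃ c, b = a ++ c ∧ a ++ c = c ++ a) ∨ ∃ c, a = b ++ c ∧ b ++ c = c ++ b := by
  rcases append_eq_append_iff.mp h with ⟨c, hb, hb'⟩ | ⟨c, ha, ha'⟩
  · exact .inl ⟨c, hb, hb ▸ hb'⟩
  · exact .inr ⟨c, ha, ha ▸ ha'⟩

theorem count_mul_length_eq_of_append_comm [BEq α] (x : α) :
    ∀ {a b : List α}, a ++ b = b ++ a → a.count x * b.length = b.count x * a.length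
  | a, b, h => by
    rcases eq_or_ne a [] with rfl | ha
    · simp
    rcases eq_or_ne b [] with rfl | hb
    · simp
    have ha' := length_pos_iff.mpr ha
    have hb' := length_pos_iff.mpr hb
    rcases append_comm_cases h with ⟨c, rfl, hc⟩ | ⟨c, rfl, hc⟩
    · have ih := count_mul_length_eq_of_append_comm x hc
      simp only [count_append, length_append]
      linarith
    · have ih := count_mul_length_eq_of_append_comm x hc
      simp only [count_append, length_append]
      linarith
termination_by a b => a.length + b.length
decreasing_by all_goals subst_vars; simp only [length_append]; omega

theorem count_eq_zero_of_append_comm_of_append_comm_split [BEq α] [LawfulBEq α]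
    {u w y₁ y₂ : List α} {x b : α} (hxb : x ≠ b) (hw : w ≠ []) (huw : u ++ w = w ++ u)
    (hy : y₁ ++ y₂ = [b]) (hsplit : u ++ y₁ ++ w ++ y₂ = w ++ y₂ ++ u ++ y₁) :
    u.count x = 0 := by
  have hcomm : (u ++ y₁) ++ (w ++ y₂) = (w ++ y₂) ++ (u ++ y₁) := by
    simpa only [append_assoc] using hsplit
  have hw' := length_pos_iff.mpr hw
  have h₀ := count_mul_length_eq_of_append_comm x huw
  have h₁ := count_mul_length_eq_of_append_comm x hcomm
  have hb : [b].count x = 0 := count_eq_zero.mpr (by simpa using hxb)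
  rcases append_eq_singleton_iff.mp hy with ⟨rfl, rfl⟩ | ⟨rfl, rfl⟩ <;>
    simp only [count_append, count_nil, length_append, length_nil, length_singleton, hb,
      add_zero, Nat.mul_add, mul_one] at h₁
  · omega
  · have hwx : w.count x = 0 := by omega
    rw [hwx, zero_mul] at h₀
    exact (Nat.mul_eq_zero.mp h₀).resolve_right hw'.ne'

end List

theorem stmt_1 (u w : List Bool) :
    (u = [] ∨ w = []) ↔
      (u ++ w = w ++ u ∧
        ∃ y₁ y₂ y₃ y₄ : List Bool,
          y₁ ++ y₂ = [false] ∧ y₃ ++ y₄ = [true] ∧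
          u ++ y₁ ++ w ++ y₂ = w ++ y₂ ++ u ++ y₁ ∧
          u ++ y₃ ++ w ++ y₄ = w ++ y₄ ++ u ++ y₃) := by
  constructor
  · rintro (rfl | rfl)
    · exact ⟨by simp, [], [false], [], [true], rfl, rfl, by simp, by simp⟩
    · exact ⟨by simp, [false], [], [true], [], rfl, rfl, by simp, by simp⟩
  · rintro ⟨huw, y₁, y₂, y₃, y₄, hy₁₂, hy₃₄, hsplit₀, hsplit₁⟩
    refine or_iff_not_imp_right.mpr fun hw => ?_
    have htrue := List.count_eq_zero_of_append_comm_of_append_comm_split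
      (x := true) (by decide) hw huw hy₁₂ hsplit₀
    have hfalse := List.count_eq_zero_of_append_comm_of_append_comm_split
      (x := false) (by decide) hw huw hy₃₄ hsplit₁
    have hlen := List.count_true_add_count_false u
    exact List.length_eq_zero_iff.mp (by omega)
end

section
/- Every total computable function f : ℕ → ℕ is definable over the standard bit-string structure with the substring relation: there exists a first-order formula φ(x, y) in the language {e, 0, 1, ∘, ⊑} such that for all natural numbers a, b, f(a) = b if and only if φ(1^a, 1^b) holds in the standard structure, where 1^n denotes the string of n ones. -/
open FirstOrder

/-- Function symbols of the language of bit theory with substring relation. -/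
inductive BTFunc : ℕ → Type
  | e : BTFunc 0
  | zero : BTFunc 0
  | one : BTFunc 0
  | concat : BTFunc 2

/-- Relation symbols: the substring relation. -/
inductive BTRel : ℕ → Type
  | sub : BTRel 2

/-- The first-order language `{e, 0, 1, ∘, ⊑}` of bit theory. -/
def LBT : FirstOrder.Language := ⟨BTFunc, BTRel⟩

/-- The standard structure 𝔅 on bit strings, with ⊑ the substring relation. -/
instance : LBT.Structure (List Bool) where
  funMap {n} f := match f with
    | .e => fun _ => []
    | .zero => fun _ => [false]
    | .one => fun _ => [true]
    | .concat => fun v => v 0 ++ v 1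
  RelMap {n} r := match r with
    | .sub => fun v => v 0 <:+: v 1


/-!
Identify `n` with the tally `1ⁿ`. On tallies, concatenation is addition and `⊑` is `≤`, and a
quantifier over ℕ is a quantifier over the strings that do not contain `0`. What makes the
argument go is that primitive recursion stays definable: the values `r 0, …, r n` of a recursion
can all be written into one string `W` as blocks `00 1^(i+1) 0 1^(r i + 1) 00`, and "`W` records
`(i, y)`" is an instance of `⊑`. So `r n = v` iff some `W` records a functional relation that
contains `(0, r 0)`, is closed under the recursion step below `n`, and contains `(n, v)`. This
gives multiplication, hence Cantor pairing, hence every primitive recursive function. Finally,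
by Kleene's normal form, `f a = b` iff the bounded evaluation `evaln k c a` returns `b` for some
`k`, a primitive recursive condition under one existential quantifier.
-/

open Set Language

namespace LBT

variable {α : Type*}

def litTerm : List Bool → LBT.Term α
  | [] => Term.func BTFunc.e ![]
  | b :: l => Term.func BTFunc.concat
      ![Term.func (if b then BTFunc.one else BTFunc.zero) ![], litTerm l]

@[simp]
lemma realize_litTerm (c : List Bool) (v : α → List Bool) : (litTerm c).realize v = c := by
  induction c with
  | nil => rfl
  | cons b l ih =>
    conv_rhs => rw [← ih]
    cases b <;> rfl

@[fun_prop]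
lemma definableFun_const (c : List Bool) :
    DefinableFun LBT (∅ : Set (List Bool)) fun _ : α → List Bool => c := by
  simpa using (litTerm c).definableFun_realize (M := List Bool)

end LBT

section Strings

variable {α : Type*}

@[fun_prop]
lemma Set.DefinableFun.append {f g : (α → List Bool) → List Bool}
    (hf : DefinableFun LBT (∅ : Set (List Bool)) f) (hg : DefinableFun LBT ∅ g) :
    DefinableFun LBT ∅ fun v => f v ++ g v := by
  refine DefinableFun.comp (g := fun v => ![f v, g v]) ?_
    (DefinableFun.fun_symbol (L := LBT) (M := List Bool) BTFunc.concat)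
  intro i
  fin_cases i <;> simpa

lemma definable_setOf_isInfix {f g : (α → List Bool) → List Bool}
    (hf : DefinableFun LBT (∅ : Set (List Bool)) f) (hg : DefinableFun LBT ∅ g) :
    Definable ∅ LBT {v | f v <:+: g v} := by
  have hsub : Definable ∅ LBT {v : Fin 2 → List Bool | v 0 <:+: v 1} :=
    empty_definable_iff.2
      ⟨Relations.formula₂ (BTRel.sub : LBT.Relations 2) (.var 0) (.var 1), rfl⟩
  refine hsub.preimage_map (F := fun v => ![f v, g v]) fun i => ?_
  fin_cases i <;> simpa

-- The closure lemmas below restate `Definable.preimage_map`, `Definable.inter`, … for set-builder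
-- notation, so that `apply` reads the predicates off a goal `Definable ∅ LBT {v | …}`.
lemma definable_setOf_mem {β : Type*} [Finite β] {S : Set (β → List Bool)}
    {F : (α → List Bool) → β → List Bool} (hS : Definable ∅ LBT S)
    (hF : ∀ j, DefinableFun LBT ∅ fun v => F v j) : Definable ∅ LBT {v | F v ∈ S} :=
  hS.preimage_map hF

lemma definable_setOf_and {P Q : (α → List Bool) → Prop} (hP : Definable ∅ LBT {v | P v})
    (hQ : Definable ∅ LBT {v | Q v}) : Definable ∅ LBT {v | P v ∧ Q v} :=
  hP.inter hQ

lemma definable_setOf_not {P : (α → List Bool) → Prop} (hP : Definable ∅ LBT {v | P v}) :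
    Definable ∅ LBT {v | ¬ P v} :=
  hP.compl

lemma definable_setOf_imp {P Q : (α → List Bool) → Prop} (hP : Definable ∅ LBT {v | P v})
    (hQ : Definable ∅ LBT {v | Q v}) : Definable ∅ LBT {v | P v → Q v} :=
  hP.himp hQ

lemma definable_setOf_exists [Finite α] {P : (α → List Bool) → List Bool → Prop}
    (h : Definable ∅ LBT {u : Option α → List Bool | P (fun i => u (some i)) (u none)}) :
    Definable ∅ LBT {v | ∃ x, P v x} := by
  convert h.image_comp some using 1
  ext v
  refine ⟨fun ⟨x, hx⟩ => ⟨Option.elim' x v, hx, rfl⟩, ?_⟩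
  rintro ⟨u, hu, rfl⟩
  exact ⟨u none, hu⟩

lemma definable_setOf_forall [Finite α] {P : (α → List Bool) → List Bool → Prop}
    (h : Definable ∅ LBT {u : Option α → List Bool | P (fun i => u (some i)) (u none)}) :
    Definable ∅ LBT {v | ∀ x, P v x} := by
  simpa only [not_exists, not_not] using
    definable_setOf_not (definable_setOf_exists (P := fun v x => ¬ P v x) (definable_setOf_not h))

end Strings

section Tallies

def tally (n : ℕ) : List Bool := List.replicate n true

lemma tally_injective : Function.Injective tally := fun m n h => by
  simpa [tally] using congrArg List.length h

@[simp]
lemma tally_inj {m n : ℕ} : tally m = tally n ↔ m = n := tally_injective.eq_iff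

lemma tally_add (m n : ℕ) : tally (m + n) = tally m ++ tally n := List.replicate_add m n true

@[simp]
lemma tally_zero : tally 0 = [] := rfl

lemma tally_succ (n : ℕ) : tally (n + 1) = true :: tally n := List.replicate_succ ..

lemma tally_succ' (n : ℕ) : tally (n + 1) = tally n ++ [true] := List.replicate_succ' ..

lemma tally_isInfix_tally {m n : ℕ} : tally m <:+: tally n ↔ m ≤ n := by
  refine ⟨fun h => by simpa [tally] using h.length_le, fun h => ⟨[], tally (n - m), ?_⟩⟩
  rw [List.nil_append, ← tally_add, Nat.add_sub_cancel' h]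

lemma mem_range_tally {s : List Bool} : s ∈ range tally ↔ ¬ [false] <:+: s := by
  rw [List.singleton_infix_iff]
  constructor
  · rintro ⟨n, rfl⟩ h
    simpa using List.eq_of_mem_replicate h
  · intro h
    refine ⟨s.length, (List.eq_replicate_iff.2 ⟨rfl, fun b hb => ?_⟩).symm⟩
    cases b
    · exact absurd hb h
    · rfl

variable {α β : Type*}

lemma definable_setOf_mem_range_tally {f : (α → List Bool) → List Bool}
    (hf : DefinableFun LBT ∅ f) : Definable ∅ LBT {v | f v ∈ range tally} := by
  simp only [mem_range_tally]
  exact definable_setOf_not (definable_setOf_isInfix (by fun_prop) hf)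

def tallies (w : α → ℕ) : α → List Bool := fun i => tally (w i)

lemma tallies_injective : Function.Injective (tallies (α := α)) :=
  tally_injective.comp_left

lemma definable_range_tallies [Finite α] : Definable ∅ LBT (range (tallies (α := α))) := by
  have : range (tallies (α := α)) = ⋂ i, {v | v i ∈ range tally} := by
    ext v; simp [tallies, funext_iff, Classical.skolem]
  rw [this]
  exact definable_iInter_of_finite fun i => definable_setOf_mem_range_tally (by fun_prop)

def TallyDefinable (R : Set (α → ℕ)) : Prop := Definable ∅ LBT (tallies '' R)

namespace TallyDefinable

variable {R Q : Set (α → ℕ)}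

lemma of_definable [Finite α] {P : (α → List Bool) → Prop} (h : Definable ∅ LBT {v | P v}) :
    TallyDefinable {w | P (tallies w)} := by
  rw [TallyDefinable, ← preimage_ofPred_eq, image_preimage_eq_range_inter]
  exact definable_range_tallies.inter h

lemma inter (hR : TallyDefinable R) (hQ : TallyDefinable Q) : TallyDefinable (R ∩ Q) := by
  rw [TallyDefinable, image_inter tallies_injective]
  exact Definable.inter hR hQ

lemma union (hR : TallyDefinable R) (hQ : TallyDefinable Q) : TallyDefinable (R ∪ Q) := by
  rw [TallyDefinable, image_union]
  exact Definable.union hR hQ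

lemma compl [Finite α] (hR : TallyDefinable R) : TallyDefinable Rᶜ := by
  rw [TallyDefinable, image_compl_eq_range_sdiff_image tallies_injective]
  exact definable_range_tallies.sdiff hR

lemma image_comp [Finite α] [Finite β] {R : Set (β → ℕ)} (f : α → β) (h : TallyDefinable R) :
    TallyDefinable ((fun w => w ∘ f) '' R) := by
  have := Definable.image_comp h f
  rw [image_image] at this
  rw [TallyDefinable, image_image]
  exact this

lemma preimage_comp [Finite β] (f : α → β) (h : TallyDefinable R) :
    TallyDefinable ((fun w : β → ℕ => w ∘ f) ⁻¹' R) := by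
  convert of_definable (Definable.preimage_comp f h) using 1
  ext w
  exact (tallies_injective.mem_set_image (a := w ∘ f)).symm

lemma iInter [Finite α] {ι : Type*} [Finite ι] {R : ι → Set (α → ℕ)}
    (h : ∀ i, TallyDefinable (R i)) : TallyDefinable (⋂ i, R i) := by
  convert of_definable (P := (· ∈ ⋂ i, tallies '' R i)) (definable_iInter_of_finite h) using 1
  ext w
  simp [tallies_injective.mem_set_image]

lemma setOf_exists [Finite α] {P : (α → ℕ) → ℕ → Prop}
    (h : TallyDefinable {u : Option α → ℕ | P (fun i => u (some i)) (u none)}) :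
    TallyDefinable {w | ∃ n, P w n} := by
  convert h.image_comp some using 1
  ext w
  refine ⟨fun ⟨n, hn⟩ => ⟨Option.elim' n w, hn, rfl⟩, ?_⟩
  rintro ⟨u, hu, rfl⟩
  exact ⟨u none, hu⟩

end TallyDefinable

@[fun_prop]
def TallyDefinableFun (f : (α → ℕ) → ℕ) : Prop := TallyDefinable f.tupleGraph

lemma TallyDefinable.preimage_map [Finite α] [Finite β] {R : Set (β → ℕ)}
    {F : (α → ℕ) → β → ℕ} (hF : ∀ j, TallyDefinableFun fun w => F w j) (hR : TallyDefinable R) :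
    TallyDefinable (F ⁻¹' R) := by
  have hgraph : TallyDefinable {u : α ⊕ β → ℕ | ∀ j, F (u ∘ Sum.inl) j = u (Sum.inr j)} := by
    convert TallyDefinable.iInter fun j =>
      (hF j).preimage_comp fun o : Option α => o.elim (Sum.inr j) Sum.inl
    ext u
    simp only [mem_iInter]
    rfl
  convert (hgraph.inter (hR.preimage_comp Sum.inr)).image_comp Sum.inl using 1
  ext w
  simp only [mem_preimage, mem_image, mem_inter_iff, mem_ofPred_eq]
  constructor
  · intro hw
    exact ⟨Sum.elim w (F w), ⟨fun j => rfl, hw⟩, rfl⟩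
  · rintro ⟨u, ⟨hu, hR⟩, rfl⟩
    rwa [show u ∘ Sum.inr = F (u ∘ Sum.inl) from funext fun j => (hu j).symm] at hR

end Tallies

namespace TallyDefinableFun

variable {α β : Type*} [Finite α] {f g : (α → ℕ) → ℕ}

lemma of_definableFun {F : (α → List Bool) → List Bool} (hF : DefinableFun LBT ∅ F)
    (h : ∀ w, F (tallies w) = tally (f w)) : TallyDefinableFun f := by
  have := TallyDefinable.of_definable (P := (· ∈ F.tupleGraph)) hF
  have hcomp : ∀ w : Option α → ℕ, tallies w ∘ some = tallies (w ∘ some) := fun _ => rfl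
  simpa only [TallyDefinableFun, Function.tupleGraph, mem_ofPred_eq, hcomp, h, tallies,
    tally_inj] using this

@[fun_prop]
lemma proj (i : α) : TallyDefinableFun fun w => w i :=
  of_definableFun (F := fun v => v i) (by fun_prop) fun _ => rfl

@[fun_prop]
lemma const (c : ℕ) : TallyDefinableFun fun _ : α → ℕ => c :=
  of_definableFun (F := fun _ => tally c) (by fun_prop) fun _ => rfl

lemma comp [Finite β] {f : (β → ℕ) → ℕ} {g : (α → ℕ) → β → ℕ} (hf : TallyDefinableFun f)
    (hg : ∀ j, TallyDefinableFun fun w => g w j) : TallyDefinableFun fun w => f (g w) := by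
  refine TallyDefinable.preimage_map
    (F := fun u : Option α → ℕ => Option.elim' (u none) (g (u ∘ some))) ?_ hf
  rintro (_ | j)
  · exact proj none
  · exact (hg j).preimage_comp (Option.map some)

lemma comp₂ {f : ℕ → ℕ → ℕ} (hf : TallyDefinableFun fun v : Fin 2 → ℕ => f (v 0) (v 1))
    {g₁ g₂ : (α → ℕ) → ℕ} (hg₁ : TallyDefinableFun g₁) (hg₂ : TallyDefinableFun g₂) :
    TallyDefinableFun fun w => f (g₁ w) (g₂ w) :=
  hf.comp (g := fun w => ![g₁ w, g₂ w]) fun j => by fin_cases j <;> assumption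

@[fun_prop]
lemma add (hf : TallyDefinableFun f) (hg : TallyDefinableFun g) :
    TallyDefinableFun fun w => f w + g w :=
  comp₂ (f := (· + ·)) (of_definableFun (F := fun v => v 0 ++ v 1) (by fun_prop)
    fun w => (tally_add _ _).symm) hf hg

lemma setOf_eq (hf : TallyDefinableFun f) (hg : TallyDefinableFun g) :
    TallyDefinable {w | f w = g w} := by
  have := TallyDefinable.of_definable
    (DefinableFun.ofPred_eq (f := fun v : Fin 2 → List Bool => v 0) (g := fun v => v 1)
      (by fun_prop) (by fun_prop))
  simp only [tallies, tally_inj] at this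
  exact this.preimage_map (F := fun w => ![f w, g w]) fun j => by fin_cases j <;> assumption

lemma setOf_lt (hf : TallyDefinableFun f) (hg : TallyDefinableFun g) :
    TallyDefinable {w | f w < g w} := by
  have := TallyDefinable.of_definable (definable_setOf_isInfix
    (f := fun v : Fin 2 → List Bool => v 0 ++ [true]) (g := fun v => v 1)
      (by fun_prop) (by fun_prop))
  simp only [tallies, ← tally_succ', tally_isInfix_tally, Nat.add_one_le_iff] at this
  exact this.preimage_map (F := fun w => ![f w, g w]) fun j => by fin_cases j <;> assumption

end TallyDefinableFun

def pairCode (x y : List Bool) : List Bool :=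
  [false, false] ++ x ++ [true, false] ++ y ++ [true, false, false]

@[fun_prop]
lemma Set.DefinableFun.pairCode {α : Type*} {f g : (α → List Bool) → List Bool}
    (hf : DefinableFun LBT ∅ f) (hg : DefinableFun LBT ∅ g) :
    DefinableFun LBT ∅ fun v => pairCode (f v) (g v) := by
  unfold _root_.pairCode
  fun_prop

-- Consecutive blocks share their `00`; as every run of `1`s is nonempty, `00` followed by `1`
-- occurs only at the start of a block, so the blocks are the only occurrences of `pairCode`s.
def traceCode : List (ℕ × ℕ) → List Bool
  | [] => [false, false]
  | (a, b) :: l => false :: false :: (tally (a + 1) ++ false :: (tally (b + 1) ++ traceCode l))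

lemma pairCode_tally (i y : ℕ) : pairCode (tally i) (tally y) =
    false :: false :: (tally (i + 1) ++ false :: (tally (y + 1) ++ [false, false])) := by
  simp [pairCode, tally_succ']

lemma traceCode_eq_cons (l : List (ℕ × ℕ)) : ∃ r, traceCode l = false :: false :: r := by
  rcases l with _ | ⟨⟨a, b⟩, l⟩ <;> exact ⟨_, rfl⟩

lemma tally_append_false_prefix_iff {m n : ℕ} {xs ys : List Bool} :
    tally m ++ false :: xs <+: tally n ++ false :: ys ↔ m = n ∧ xs <+: ys := by
  induction m generalizing n with
  | zero => cases n <;> simp [tally_succ]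
  | succ m ih => cases n <;> simp [tally_succ, ih]

lemma isInfix_of_isInfix_tally_append {P X : List Bool} {k : ℕ}
    (h : false :: P <:+: tally k ++ X) : false :: P <:+: X := by
  induction k with
  | zero => exact h
  | succ k ih =>
    rw [tally_succ, List.cons_append, List.infix_cons_iff] at h
    exact ih (h.resolve_left fun hp => by simp at hp)

lemma pairCode_isInfix_traceCode {i y : ℕ} {l : List (ℕ × ℕ)} :
    pairCode (tally i) (tally y) <:+: traceCode l ↔ (i, y) ∈ l := by
  rw [pairCode_tally]
  induction l with
  | nil => exact iff_of_false (fun h => by simpa [traceCode] using h.length_le) (by simp)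
  | cons ab l ih =>
    obtain ⟨a, b⟩ := ab
    obtain ⟨r, hr⟩ := traceCode_eq_cons l
    rw [traceCode, List.mem_cons, ← ih, Prod.mk.injEq]
    constructor
    · intro h
      rcases List.infix_cons_iff.1 h with h | h
      · simp only [List.cons_prefix_cons, true_and, tally_append_false_prefix_iff, hr] at h
        exact .inl ⟨by omega, by omega⟩
      · rcases List.infix_cons_iff.1 h with h | h
        · simp [tally_succ] at h
        · have h := isInfix_of_isInfix_tally_append h
          rcases List.infix_cons_iff.1 h with h | h
          · simp [tally_succ] at h
          · exact .inr (isInfix_of_isInfix_tally_append h)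
    · rintro (⟨rfl, rfl⟩ | h)
      · exact List.IsPrefix.isInfix ⟨r, by simp [hr]⟩
      · refine h.trans (List.IsSuffix.isInfix
          ⟨false :: false :: (tally (a + 1) ++ false :: tally (b + 1)), ?_⟩)
        simp

section Recursion

-- `W` records `(x, y)` when `pairCode x y <:+: W`. The relation recorded by a trace is
-- functional, contains some `(0, c)` with `![p, c] ∈ G`, is closed under the step `H` below `n`,
-- and contains `(n, val)`.
def IsTrace (G : Set (Fin 2 → List Bool)) (H : Set (Fin 4 → List Bool)) (p n val W : List Bool) :
    Prop :=
  (∀ x ∈ range tally, ∀ y ∈ range tally, ∀ y' ∈ range tally,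
      pairCode x y <:+: W → pairCode x y' <:+: W → y = y') ∧
  (∃ c, ![p, c] ∈ G ∧ pairCode [] c <:+: W) ∧
  (∀ x ∈ range tally, ∀ y ∈ range tally, x ++ [true] <:+: n → pairCode x y <:+: W →
      ∃ c, ![p, x, y, c] ∈ H ∧ pairCode (x ++ [true]) c <:+: W) ∧
  pairCode n val <:+: W

lemma definable_setOf_isTrace {α : Type*} [Finite α] {G : Set (Fin 2 → List Bool)}
    {H : Set (Fin 4 → List Bool)} (hG : Definable ∅ LBT G) (hH : Definable ∅ LBT H) (a b c : α) :
    Definable ∅ LBT {v | ∃ W, IsTrace G H (v a) (v b) (v c) W} := by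
  unfold IsTrace
  apply definable_setOf_exists
  -- atoms first: `<:+:` and `∈ range tally` would otherwise be unfolded as existentials
  repeat'
    first
    | exact definable_setOf_mem_range_tally (by fun_prop)
    | exact definable_setOf_isInfix (by fun_prop) (by fun_prop)
    | exact DefinableFun.ofPred_eq (by fun_prop) (by fun_prop)
    | (refine definable_setOf_mem hG fun j => ?_; fin_cases j <;> simp <;> fun_prop)
    | (refine definable_setOf_mem hH fun j => ?_; fin_cases j <;> simp <;> fun_prop)
    | apply definable_setOf_and
    | apply definable_setOf_imp
    | apply definable_setOf_forall
    | apply definable_setOf_exists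

def primRec (g : ℕ → ℕ) (h : ℕ → ℕ → ℕ → ℕ) (p n : ℕ) : ℕ :=
  Nat.rec (motive := fun _ => ℕ) (g p) (fun i r => h p i r) n

variable {g : ℕ → ℕ} {h : ℕ → ℕ → ℕ → ℕ} {p n val : ℕ}

lemma primRec_succ (i : ℕ) : primRec g h p (i + 1) = h p i (primRec g h p i) := rfl

lemma isTrace_traceCode :
    IsTrace (tallies '' {w | g (w 0) = w 1}) (tallies '' {w | h (w 0) (w 1) (w 2) = w 3})
      (tally p) (tally n) (tally (primRec g h p n))
      (traceCode ((List.range (n + 1)).map fun i => (i, primRec g h p i))) := by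
  have hmem : ∀ i y, pairCode (tally i) (tally y) <:+:
      traceCode ((List.range (n + 1)).map fun i => (i, primRec g h p i)) ↔
        i ≤ n ∧ y = primRec g h p i := by
    simp [pairCode_isInfix_traceCode, eq_comm]
  refine ⟨?_, ⟨tally (g p), ⟨![p, g p], rfl, ?_⟩, (hmem 0 _).2 ⟨n.zero_le, rfl⟩⟩, ?_,
    (hmem n _).2 ⟨le_rfl, rfl⟩⟩
  · rintro _ ⟨i, rfl⟩ _ ⟨y, rfl⟩ _ ⟨y', rfl⟩ hy hy'
    rw [(hmem i y).1 hy |>.2, (hmem i y').1 hy' |>.2]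
  · ext j; fin_cases j <;> rfl
  · rintro _ ⟨i, rfl⟩ _ ⟨y, rfl⟩ hi hy
    rw [← tally_succ', tally_isInfix_tally] at hi
    obtain ⟨-, rfl⟩ := (hmem i y).1 hy
    refine ⟨tally (primRec g h p (i + 1)),
      ⟨![p, i, primRec g h p i, primRec g h p (i + 1)], rfl, ?_⟩, ?_⟩
    · ext j; fin_cases j <;> rfl
    · rw [← tally_succ', hmem]
      exact ⟨hi, rfl⟩

lemma IsTrace.primRec_eq {W : List Bool}
    (hW : IsTrace (tallies '' {w | g (w 0) = w 1}) (tallies '' {w | h (w 0) (w 1) (w 2) = w 3})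
      (tally p) (tally n) (tally val) W) :
    primRec g h p n = val := by
  obtain ⟨huniq, ⟨c, ⟨w, hw, hwc⟩, hc⟩, hstep, hval⟩ := hW
  have hrec : ∀ i ≤ n, pairCode (tally i) (tally (primRec g h p i)) <:+: W := by
    intro i hi
    induction i with
    | zero =>
      obtain ⟨h0, h1⟩ : w 0 = p ∧ tally (w 1) = c := by
        simpa [tallies, funext_iff, Fin.forall_fin_two] using hwc
      rwa [← h1, ← hw, h0] at hc
    | succ i ih =>
      obtain ⟨c, ⟨w, hw, hwc⟩, hc⟩ := hstep _ ⟨i, rfl⟩ _ ⟨_, rfl⟩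
        (by rwa [← tally_succ', tally_isInfix_tally]) (ih (by omega))
      obtain ⟨h0, h1, h2, h3⟩ :
          w 0 = p ∧ w 1 = i ∧ w 2 = primRec g h p i ∧ tally (w 3) = c := by
        simpa [tallies, funext_iff, Fin.forall_fin_succ] using hwc
      rwa [← tally_succ', ← h3, ← hw, h0, h1, h2] at hc
  exact tally_injective (huniq _ ⟨n, rfl⟩ _ ⟨_, rfl⟩ _ ⟨val, rfl⟩ (hrec n le_rfl) hval)

lemma primRec_eq_iff_exists_isTrace :
    primRec g h p n = val ↔
      ∃ W, IsTrace (tallies '' {w | g (w 0) = w 1}) (tallies '' {w | h (w 0) (w 1) (w 2) = w 3})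
        (tally p) (tally n) (tally val) W :=
  ⟨fun hval => ⟨_, hval ▸ isTrace_traceCode⟩, fun ⟨_, hW⟩ => hW.primRec_eq⟩

end Recursion

namespace TallyDefinableFun

variable {α : Type*} [Finite α] {f g : (α → ℕ) → ℕ}

lemma primRec {g₀ : ℕ → ℕ} {h : ℕ → ℕ → ℕ → ℕ}
    (hg₀ : TallyDefinable {w : Fin 2 → ℕ | g₀ (w 0) = w 1})
    (hh : TallyDefinable {w : Fin 4 → ℕ | h (w 0) (w 1) (w 2) = w 3})
    (hf : TallyDefinableFun f) (hg : TallyDefinableFun g) :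
    TallyDefinableFun fun w => primRec g₀ h (f w) (g w) := by
  refine comp₂ (f := _root_.primRec g₀ h) ?_ hf hg
  have := TallyDefinable.of_definable
    (definable_setOf_isTrace hg₀ hh (some (0 : Fin 2)) (some 1) none)
  simp only [tallies, ← primRec_eq_iff_exists_isTrace] at this
  exact this

lemma ite {P : (α → ℕ) → Prop} [DecidablePred P] (hP : TallyDefinable {w | P w})
    (hf : TallyDefinableFun f) (hg : TallyDefinableFun g) :
    TallyDefinableFun fun w => if P w then f w else g w := by
  have hP' : TallyDefinable {u : Option α → ℕ | P (u ∘ some)} := hP.preimage_comp some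
  rw [TallyDefinableFun]
  convert (hP'.inter hf).union (hP'.compl.inter hg) using 1
  ext u
  by_cases h : P (u ∘ some) <;> simp [Function.tupleGraph, h]

@[fun_prop]
lemma mul (hf : TallyDefinableFun f) (hg : TallyDefinableFun g) :
    TallyDefinableFun fun w => f w * g w := by
  have key (a n : ℕ) : _root_.primRec (fun _ => 0) (fun a _ r => r + a) a n = a * n := by
    induction n with
    | zero => rfl
    | succ n ih => rw [primRec_succ, ih, Nat.mul_succ]
  simpa only [key] using primRec (g₀ := fun _ => 0) (h := fun a _ r => r + a)
    (setOf_eq (const 0) (proj 1)) (setOf_eq (add (proj 2) (proj 0)) (proj 3)) hf hg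

@[fun_prop]
lemma pair (hf : TallyDefinableFun f) (hg : TallyDefinableFun g) :
    TallyDefinableFun fun w => Nat.pair (f w) (g w) :=
  -- `Nat.pair a b` unfolds to `if a < b then b * b + a else a * a + a + b`
  ite (setOf_lt hf hg) (by fun_prop) (by fun_prop)

lemma unpair_fst (hf : TallyDefinableFun f) : TallyDefinableFun fun w => (f w).unpair.1 := by
  have := TallyDefinable.setOf_exists
    (P := fun (u : Option α → ℕ) b => Nat.pair (u none) b = f (u ∘ some))
    (setOf_eq (by fun_prop) (hf.comp fun i => proj (some (some i))))
  rw [TallyDefinableFun]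
  convert this using 1
  ext u
  simp only [Function.tupleGraph, mem_ofPred_eq]
  exact ⟨fun h => ⟨_, h ▸ Nat.pair_unpair _⟩, fun ⟨b, hb⟩ => by simp [← hb]⟩

lemma unpair_snd (hf : TallyDefinableFun f) : TallyDefinableFun fun w => (f w).unpair.2 := by
  have := TallyDefinable.setOf_exists
    (P := fun (u : Option α → ℕ) a => Nat.pair a (u none) = f (u ∘ some))
    (setOf_eq (by fun_prop) (hf.comp fun i => proj (some (some i))))
  rw [TallyDefinableFun]
  convert this using 1
  ext u
  simp only [Function.tupleGraph, mem_ofPred_eq]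
  exact ⟨fun h => ⟨_, h ▸ Nat.pair_unpair _⟩, fun ⟨b, hb⟩ => by simp [← hb]⟩

end TallyDefinableFun

-- `α : Type` because the induction hypotheses are used at `Fin 2` and `Fin 4`
theorem Nat.Primrec.tallyDefinableFun {f : ℕ → ℕ} (hf : Nat.Primrec f) {α : Type} [Finite α]
    {F : (α → ℕ) → ℕ} (hF : TallyDefinableFun F) : TallyDefinableFun fun w => f (F w) := by
  induction hf generalizing α with
  | zero => exact .const 0
  | succ => exact .add hF (.const 1)
  | left => exact .unpair_fst hF
  | right => exact .unpair_snd hF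
  | pair _ _ ihf ihg => exact .pair (ihf hF) (ihg hF)
  | comp _ _ ihf ihg => exact ihf (ihg hF)
  | @prec g h _ _ ihg ihh =>
    exact .primRec (h := fun z y r => h (Nat.pair z (Nat.pair y r)))
      ((ihg (.proj 0)).setOf_eq (.proj 1))
      ((ihh (.pair (.proj 0) (.pair (.proj 1) (.proj 2)))).setOf_eq (.proj 3))
      (.unpair_fst hF) (.unpair_snd hF)

theorem Computable.tallyDefinable_graph {f : ℕ → ℕ} (hf : Computable f) :
    TallyDefinable {w : Fin 2 → ℕ | f (w 0) = w 1} := by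
  obtain ⟨c, hc⟩ := Nat.Partrec.Code.exists_code.1 (Partrec.nat_iff.1 hf)
  -- `encode` sends `none` to `0` and `some b` to `b + 1`
  let step (m : ℕ) : ℕ := Encodable.encode (c.evaln m.unpair.1 m.unpair.2)
  have hstep : Nat.Primrec step := Primrec.nat_iff.1 <| Primrec.encode.comp <|
    Nat.Partrec.Code.primrec_evaln.comp <|
      ((Primrec.fst.comp Primrec.unpair).pair (Primrec.const c)).pair
        (Primrec.snd.comp Primrec.unpair)
  have hgraph (a b : ℕ) : f a = b ↔ ∃ k, step (Nat.pair k a) = b + 1 := by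
    rw [show f a = b ↔ b ∈ c.eval a by simp [hc, eq_comm], Nat.Partrec.Code.evaln_complete]
    refine exists_congr fun k => ?_
    rw [show b + 1 = Encodable.encode (some b) from rfl, Encodable.encode_inj]
    simp [Option.mem_def]
  simp only [hgraph]
  exact TallyDefinable.setOf_exists
    ((hstep.tallyDefinableFun (by fun_prop)).setOf_eq (by fun_prop))

theorem stmt_16 (f : ℕ → ℕ) (hf : Computable f) :
    ∃ φ : LBT.Formula (Fin 2),
      ∀ a b : ℕ, f a = b ↔
        φ.Realize (M := List Bool)
          (fun i => if i = 0 then List.replicate a true else List.replicate b true) := by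
  obtain ⟨φ, hφ⟩ := empty_definable_iff.1 hf.tallyDefinable_graph
  refine ⟨φ, fun a b => ?_⟩
  have hv : (fun i : Fin 2 => if i = 0 then List.replicate a true else List.replicate b true) =
      tallies ![a, b] := by
    funext i; fin_cases i <;> rfl
  rw [hv, ← mem_ofPred_eq (p := φ.Realize), ← hφ, tallies_injective.mem_set_image]
  rfl
end

section
/- For every bit string α, the set of bit strings β with |β| ≤ |α| is finite, and for any model of the axioms F₅–F₁₁ (the theory F), every element x satisfying x ⊴ biteral(α) equals biteral(β) for some bit string β with |β| ≤ |α|. -/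
/-- The biteral map in a structure `(M, op, e, z, o)`. -/
def biteral {M : Type*} (op : M → M → M) (e z o : M) (α : List Bool) : M :=
  α.foldl (fun m b => op m (if b then o else z)) e

section Biteral

variable {M : Type*} (op : M → M → M) (e z o : M)

lemma biteral_append_singleton (α : List Bool) (b : Bool) :
    biteral op e z o (α ++ [b]) = op (biteral op e z o α) (if b then o else z) := by
  simp [biteral]

variable {op z o} (rel : M → M → Prop)

lemma rel_of_rel_op_bit
    (hF7 : ∀ x y, rel (op x z) (op y z) ↔ rel x y)
    (hF8 : ∀ x y, rel (op x z) (op y o) ↔ rel x y)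
    (hF9 : ∀ x y, rel (op x o) (op y z) ↔ rel x y)
    (hF10 : ∀ x y, rel (op x o) (op y o) ↔ rel x y)
    {x y : M} (b c : Bool) (h : rel (op x (if c then o else z)) (op y (if b then o else z))) :
    rel x y := by
  cases b <;> cases c
  · exact (hF7 x y).mp h
  · exact (hF9 x y).mp h
  · exact (hF8 x y).mp h
  · exact (hF10 x y).mp h

lemma eq_e_or_exists_eq_op_bit (hF11 : ∀ x, x = e ∨ ∃ y, x = op y z ∨ x = op y o) (x : M) :
    x = e ∨ ∃ y, ∃ c : Bool, x = op y (if c then o else z) := by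
  rcases hF11 x with hx | ⟨y, hx | hx⟩
  · exact .inl hx
  · exact .inr ⟨y, false, hx⟩
  · exact .inr ⟨y, true, hx⟩

theorem exists_biteral_of_rel_biteral
    (hF6 : ∀ x, rel x e → x = e)
    (hF7 : ∀ x y, rel (op x z) (op y z) ↔ rel x y)
    (hF8 : ∀ x y, rel (op x z) (op y o) ↔ rel x y)
    (hF9 : ∀ x y, rel (op x o) (op y z) ↔ rel x y)
    (hF10 : ∀ x y, rel (op x o) (op y o) ↔ rel x y)
    (hF11 : ∀ x, x = e ∨ ∃ y, x = op y z ∨ x = op y o) (α : List Bool) :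
    ∀ x, rel x (biteral op e z o α) →
      ∃ β : List Bool, β.length ≤ α.length ∧ x = biteral op e z o β := by
  induction α using List.reverseRecOn with
  | nil => exact fun x hx => ⟨[], le_rfl, hF6 x hx⟩
  | append_singleton α b ih =>
    intro x hx
    rcases eq_e_or_exists_eq_op_bit e hF11 x with rfl | ⟨y, c, rfl⟩
    · exact ⟨[], Nat.zero_le _, rfl⟩
    rw [biteral_append_singleton] at hx
    obtain ⟨β, hβ, rfl⟩ := ih y (rel_of_rel_op_bit rel hF7 hF8 hF9 hF10 b c hx)
    refine ⟨β ++ [c], by simpa using hβ, ?_⟩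
    rw [biteral_append_singleton]

end Biteral

theorem stmt_18_general {M : Type*} (op : M → M → M) (e z o : M) (rel : M → M → Prop)
    (hF6 : ∀ x, rel x e → x = e)
    (hF7 : ∀ x y, rel (op x z) (op y z) ↔ rel x y)
    (hF8 : ∀ x y, rel (op x z) (op y o) ↔ rel x y)
    (hF9 : ∀ x y, rel (op x o) (op y z) ↔ rel x y)
    (hF10 : ∀ x y, rel (op x o) (op y o) ↔ rel x y)
    (hF11 : ∀ x, x = e ∨ ∃ y, x = op y z ∨ x = op y o) :
    ∀ α : List Bool,
      {β : List Bool | β.length ≤ α.length}.Finite ∧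
      ∀ x : M, rel x (biteral op e z o α) →
        ∃ β : List Bool, β.length ≤ α.length ∧ x = biteral op e z o β :=
  fun α => ⟨List.finite_length_le Bool α.length,
    exists_biteral_of_rel_biteral e rel hF6 hF7 hF8 hF9 hF10 hF11 α⟩

theorem stmt_18 {M : Type*} (op : M → M → M) (e z o : M) (rel : M → M → Prop)
    (hB1 : ∀ x, x = op e x ∧ x = op x e)
    (hB2 : ∀ x y w, op (op x y) w = op x (op y w))
    (hB3 : ∀ x y, x ≠ y → op x z ≠ op y z ∧ op x o ≠ op y o)
    (hB4 : ∀ x y, op x z ≠ op y o)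
    (hF5 : ∀ x, rel e x)
    (hF6 : ∀ x, rel x e → x = e)
    (hF7 : ∀ x y, rel (op x z) (op y z) ↔ rel x y)
    (hF8 : ∀ x y, rel (op x z) (op y o) ↔ rel x y)
    (hF9 : ∀ x y, rel (op x o) (op y z) ↔ rel x y)
    (hF10 : ∀ x y, rel (op x o) (op y o) ↔ rel x y)
    (hF11 : ∀ x, x = e ∨ ∃ y, x = op y z ∨ x = op y o) :
    ∀ α : List Bool,
      {β : List Bool | β.length ≤ α.length}.Finite ∧
      ∀ x : M, rel x (biteral op e z o α) →
        ∃ β : List Bool, β.length ≤ α.length ∧ x = biteral op e z o β :=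
  stmt_18_general op e z o rel hF6 hF7 hF8 hF9 hF10 hF11
end
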